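/- For a monoid (algebra) A in a field k, the monoid of natural endotransformations of the forgetful functor from finite-dimensional A-modules to vector spaces is isomorphic as a k-algebra to A itself, via the map sending a ∈ A to the natural transformation whose component at a module (V, ρ) is the action ρ(a). -/

import Mathlib

open CategoryTheory

section aux

variable (k : Type) [Field k] (A : Type) [Ring A] [Algebra k A]

/-- The forgetful functor. -/
noncomputable abbrev FForget := forget₂ (FGModuleCat A) (ModuleCat A) ⋙
  ModuleCat.restrictScalars (algebraMap k A)

/-- The object of the forgetful functor at `M`. -/
noncomputable abbrev FObj (M : FGModuleCat A) : ModuleCat k :=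
  (ModuleCat.restrictScalars (algebraMap k A)).obj
    ((forget₂ (FGModuleCat A) (ModuleCat A)).obj M)

/-- The component at `M` of the action of `a`. -/
noncomputable def actApp (a : A) (M : FGModuleCat A) : FObj k A M ⟶ FObj k A M := ModuleCat.ofHom (X := FObj k A M) (Y := FObj k A M)
 { toFun := fun m => a • m
   map_add' := fun x y => smul_add a x y
   map_smul' := fun c m => by
    show a • (c • m) = c • (a • m)
    erw [ModuleCat.restrictScalars.smul_def, ModuleCat.restrictScalars.smul_def,
      smul_smul, smul_smul, Algebra.commutes]
    rfl }

/-- Action of `a` as a natural endotransformation of the forgetful functor. -/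
noncomputable def actNat (a : A) : End (FForget k A) where
  app M := actApp k A a M
  naturality M N f := by
    refine ModuleCat.hom_ext (LinearMap.ext fun m => ?_)
    exact (f.hom.hom.map_smul a m).symm

lemma actApp_one (M : FGModuleCat A) : actApp k A 1 M = 𝟙 (FObj k A M) :=
  ModuleCat.hom_ext (LinearMap.ext fun m => one_smul A m)

lemma actApp_mul (a b : A) (M : FGModuleCat A) :
    actApp k A (a * b) M = actApp k A b M ≫ actApp k A a M :=
  ModuleCat.hom_ext (LinearMap.ext fun m => mul_smul a b m)

lemma actApp_zero (M : FGModuleCat A) : actApp k A 0 M = 0 :=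
  ModuleCat.hom_ext (LinearMap.ext fun m => zero_smul A m)

lemma actApp_add (a b : A) (M : FGModuleCat A) :
    actApp k A (a + b) M = actApp k A a M + actApp k A b M :=
  ModuleCat.hom_ext (LinearMap.ext fun m => add_smul a b m)

/-- The algebra homomorphism `A →ₐ[k] End (FForget k A)`. -/
noncomputable def actHom : A →ₐ[k] End (FForget k A) where
  toFun := actNat k A
  map_one' := by
    refine NatTrans.ext (funext fun M => ?_)
    exact actApp_one k A M
  map_mul' a b := by
    refine NatTrans.ext (funext fun M => ?_)
    exact actApp_mul k A a b M
  map_zero' := by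
    refine NatTrans.ext (funext fun M => ?_)
    exact actApp_zero k A M
  map_add' a b := by
    refine NatTrans.ext (funext fun M => ?_)
    exact actApp_add k A a b M
  commutes' c := NatTrans.ext (funext fun M => ModuleCat.hom_ext (LinearMap.ext fun m => rfl))

end aux

/-- For a finite-dimensional algebra `A` over a field `k`, the algebra of
natural endotransformations of the forgetful functor from finite-dimensional
(i.e. finitely generated) `A`-modules to `k`-vector spaces is isomorphic, as
a `k`-algebra, to `A` itself, via `a ↦ (action of a on each module)`. -/
theorem end_forget_iso_algebra
    (k : Type) [Field k] (A : Type) [Ring A] [Algebra k A]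
    [FiniteDimensional k A] :
    ∃ φ : A ≃ₐ[k]
        End (forget₂ (FGModuleCat A) (ModuleCat A) ⋙
          ModuleCat.restrictScalars (algebraMap k A)),
      ∀ (a : A) (M : FGModuleCat A)
        (m : (ModuleCat.restrictScalars (algebraMap k A)).obj
          ((forget₂ (FGModuleCat A) (ModuleCat A)).obj M)),
        ((φ a).app M) m = a • m := by
  have : Module.Finite A A := Module.Finite.self A
  set MA : FGModuleCat A := FGModuleCat.of A (ULift A) with hMA
  have happ : ∀ a : A, ((actHom k A) a).app MA (ULift.up (1 : A)) = ULift.up a := by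
    intro a
    show a • ULift.up (1 : A) = ULift.up a
    show ULift.up (a * 1) = ULift.up a
    rw [mul_one a]
  have hbij : Function.Bijective (actHom k A) := by
    constructor
    · intro a b h
      have h2 : ((actHom k A) a).app MA (ULift.up (1 : A)) =
          ((actHom k A) b).app MA (ULift.up (1 : A)) := by
        rw [h]
      rw [happ, happ] at h2
      exact congrArg ULift.down h2
    · intro η
      refine ⟨(η.app MA (ULift.up (1 : A))).down, ?_⟩
      refine NatTrans.ext (funext fun M => ModuleCat.hom_ext (LinearMap.ext fun m => ?_))
      have hnat : η.app M (LinearMap.toSpanSingleton A M m (1 : A)) =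
          LinearMap.toSpanSingleton A M m (η.app MA (ULift.up (1 : A))).down :=
        LinearMap.congr_fun (congrArg ModuleCat.Hom.hom
          (η.naturality (ObjectProperty.homMk (ModuleCat.ofHom
            ((LinearMap.toSpanSingleton A M m).comp
              (ULift.moduleEquiv (R := A) (M := A)).toLinearMap)) : MA ⟶ M)))
          (ULift.up (1 : A))
      erw [LinearMap.toSpanSingleton_apply, LinearMap.toSpanSingleton_apply,
        one_smul] at hnat
      exact hnat.symm
  exact ⟨AlgEquiv.ofBijective (actHom k A) hbij, fun a M m => rfl⟩
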